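/- arXiv:2105.08171 — 2 statements merged into one kernel-verified Lean document; each statement's English description precedes it below -/
import Mathlib

section
/- Substitution method lower bound for rank: Let T ∈ A ⊗ B ⊗ C be A-concise with dim A = m, and let k < m be a positive integer. Then R(T) ≥ min over k-dimensional subspaces A′ ⊆ A* of R(T restricted to A′ ⊗ B* ⊗ C*) plus (m − k), where T is viewed as a trilinear form A* ⊗ B* ⊗ C* → ℂ. -/
/-!
Take a decomposition `T = ∑_{s < r} u_s ⊗ v_s ⊗ w_s` with `r = R(T)`.  The `m` linearly
independent `A`-slices of `T` lie in the span of the `r` matrices `v_s ⊗ w_s`, so `m ≤ r`.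
The common kernel in `A*` of any `m - k` of the `u_s` has dimension at least `k`; restricting
`T` to a `k`-dimensional subspace `A′` of it kills those `m - k` terms, so `R(T|_{A′}) ≤ r - (m - k)`.
-/

noncomputable section

def tRank {a b c : ℕ} (T : Fin a → Fin b → Fin c → ℂ) : ℕ :=
  sInf {r | ∃ (u : Fin r → Fin a → ℂ) (v : Fin r → Fin b → ℂ) (w : Fin r → Fin c → ℂ),
    T = fun i j k => ∑ l, u l i * v l j * w l k}

open Finset Matrix

section

variable {a b c : ℕ}

theorem exists_fin_decomposition_of_eq_sum {ι : Type*} (T : Fin a → Fin b → Fin c → ℂ)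
    (s : Finset ι) (u : ι → Fin a → ℂ) (v : ι → Fin b → ℂ) (w : ι → Fin c → ℂ)
    (hT : T = fun i j k => ∑ l ∈ s, u l i * v l j * w l k) :
    ∃ (u' : Fin #s → Fin a → ℂ) (v' : Fin #s → Fin b → ℂ) (w' : Fin #s → Fin c → ℂ),
      T = fun i j k => ∑ l, u' l i * v' l j * w' l k := by
  refine ⟨fun l => u (s.equivFin.symm l), fun l => v (s.equivFin.symm l),
    fun l => w (s.equivFin.symm l), ?_⟩
  rw [hT]
  funext i j k
  rw [← s.sum_coe_sort, ← s.equivFin.symm.sum_comp]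

theorem tRank_le_of_eq_sum {ι : Type*} {T : Fin a → Fin b → Fin c → ℂ}
    (s : Finset ι) (u : ι → Fin a → ℂ) (v : ι → Fin b → ℂ) (w : ι → Fin c → ℂ)
    (hT : T = fun i j k => ∑ l ∈ s, u l i * v l j * w l k) :
    tRank T ≤ #s :=
  Nat.sInf_le (exists_fin_decomposition_of_eq_sum T s u v w hT)

theorem eq_sum_slices (T : Fin a → Fin b → Fin c → ℂ) :
    T = fun i j k => ∑ p : Fin b × Fin c,
      T i p.1 p.2 * (Pi.single p.1 1 : Fin b → ℂ) j * (Pi.single p.2 1 : Fin c → ℂ) k := by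
  funext i j k
  simp [Pi.single_apply, Fintype.sum_prod_type]

theorem exists_eq_sum_tRank (T : Fin a → Fin b → Fin c → ℂ) :
    ∃ (u : Fin (tRank T) → Fin a → ℂ) (v : Fin (tRank T) → Fin b → ℂ)
      (w : Fin (tRank T) → Fin c → ℂ), T = fun i j k => ∑ l, u l i * v l j * w l k :=
  Nat.sInf_mem (s := {r | ∃ (u : Fin r → Fin a → ℂ) (v : Fin r → Fin b → ℂ)
      (w : Fin r → Fin c → ℂ), T = fun i j k => ∑ l, u l i * v l j * w l k})
    ⟨_, exists_fin_decomposition_of_eq_sum T univ _ _ _ (eq_sum_slices T)⟩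

theorem le_of_linearIndependent_slices {K : Type*} [Field K] {r : ℕ}
    {T : Fin a → Fin b → Fin c → K}
    (u : Fin r → Fin a → K) (v : Fin r → Fin b → K) (w : Fin r → Fin c → K)
    (hT : T = fun i j k => ∑ l, u l i * v l j * w l k)
    (hconc : LinearIndependent K (fun i : Fin a => fun j k => T i j k)) :
    a ≤ r := by
  classical
  have hslices : ∀ i, (fun j k => T i j k) ∈
      Submodule.span K (Set.range fun l => fun j k => v l j * w l k) := by
    intro i
    have : (fun j k => T i j k) = ∑ l, u l i • fun j k => v l j * w l k := by
      subst hT; funext j k; simp [Finset.sum_apply, mul_assoc]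
    rw [this]
    exact Submodule.sum_mem _ fun l _ => Submodule.smul_mem _ _ (Submodule.subset_span ⟨l, rfl⟩)
  have := linearIndependent_le_span' _ hconc _ (Set.range_subset_iff.2 hslices)
  rw [Cardinal.mk_fin, Nat.cast_le] at this
  exact this.trans ((Fintype.card_range_le _).trans_eq (Fintype.card_fin r))

theorem exists_linearIndependent_forall_dual_eq_zero {K V ι : Type*} [Field K] [AddCommGroup V]
    [Module K V] [FiniteDimensional K V] [Fintype ι] (φ : ι → Module.Dual K V) {k : ℕ}
    (hk : k + Fintype.card ι ≤ Module.finrank K V) :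
    ∃ α : Fin k → V, LinearIndependent K α ∧ ∀ i l, φ i (α l) = 0 := by
  set P : V →ₗ[K] ι → K := LinearMap.pi φ
  have hker : k ≤ Module.finrank K (LinearMap.ker P) := by
    have hrank := P.finrank_range_add_finrank_ker
    have hrange := (Submodule.finrank_le (LinearMap.range P)).trans_eq
      (Module.finrank_fintype_fun_eq_card K)
    omega
  obtain ⟨f, hf⟩ := exists_linearIndependent_of_le_finrank hker
  refine ⟨fun l => f l, hf.map' _ (Submodule.ker_subtype _), fun i l => ?_⟩
  exact congrFun (LinearMap.mem_ker.mp (f l).2) i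

theorem restrict_eq_sum {r n : ℕ} {T : Fin a → Fin b → Fin c → ℂ}
    (u : Fin r → Fin a → ℂ) (v : Fin r → Fin b → ℂ) (w : Fin r → Fin c → ℂ)
    (hT : T = fun i j k => ∑ l, u l i * v l j * w l k) (α : Fin n → Fin a → ℂ) :
    (fun l j k => ∑ i, α l i * T i j k) = fun l j k => ∑ s, (u s ⬝ᵥ α l) * v s j * w s k := by
  subst hT
  funext l j k
  simp only [dotProduct, Finset.mul_sum, Finset.sum_mul]
  rw [Finset.sum_comm]
  exact Finset.sum_congr rfl fun _ _ => Finset.sum_congr rfl fun _ _ => by ring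

theorem tRank_restrict_add_card_le {r n : ℕ} {T : Fin a → Fin b → Fin c → ℂ}
    (u : Fin r → Fin a → ℂ) (v : Fin r → Fin b → ℂ) (w : Fin r → Fin c → ℂ)
    (hT : T = fun i j k => ∑ l, u l i * v l j * w l k) (α : Fin n → Fin a → ℂ)
    (S : Finset (Fin r)) (hαS : ∀ s ∈ S, ∀ l, u s ⬝ᵥ α l = 0) :
    tRank (fun l j k => ∑ i, α l i * T i j k) + #S ≤ r := by
  have hvanish : (fun l j k => ∑ i, α l i * T i j k) =
      fun l j k => ∑ s ∈ Sᶜ, (u s ⬝ᵥ α l) * v s j * w s k := by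
    rw [restrict_eq_sum u v w hT]
    funext l j k
    refine (Finset.sum_subset (subset_univ _) fun s _ hs => ?_).symm
    rw [hαS s (by simpa using hs) l, zero_mul, zero_mul]
  calc _ ≤ #Sᶜ + #S := Nat.add_le_add_right (tRank_le_of_eq_sum _ _ _ _ hvanish) _
    _ = r := by rw [card_compl_add_card, Fintype.card_fin]

end

theorem substitution_method_general {m b c : ℕ} (k : ℕ) (hkm : k < m)
    (T : Fin m → Fin b → Fin c → ℂ)
    (hconc : LinearIndependent ℂ (fun i : Fin m => fun j l => T i j l)) :
    ∃ α : Fin k → (Fin m → ℂ), LinearIndependent ℂ α ∧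
      tRank (fun l j k' => ∑ i, α l i * T i j k') + (m - k) ≤ tRank T := by
  obtain ⟨u, v, w, hT⟩ := exists_eq_sum_tRank T
  have hmr : m ≤ tRank T := le_of_linearIndependent_slices u v w hT hconc
  obtain ⟨S, -, hS⟩ := exists_subset_card_eq (s := (univ : Finset (Fin (tRank T)))) (n := m - k)
    (by rw [card_univ, Fintype.card_fin]; omega)
  obtain ⟨α, hα, hαS⟩ := exists_linearIndependent_forall_dual_eq_zero
    (fun s : S => dotProductEquiv ℂ (Fin m) (u s)) (k := k)
    (by rw [Fintype.card_coe, hS, Module.finrank_fin_fun]; omega)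
  refine ⟨α, hα, ?_⟩
  have := tRank_restrict_add_card_le u v w hT α S fun s hs l => hαS ⟨s, hs⟩ l
  rwa [hS] at this

theorem substitution_method {m b c : ℕ} (k : ℕ) (hk : 0 < k) (hkm : k < m)
    (T : Fin m → Fin b → Fin c → ℂ)
    (hconc : LinearIndependent ℂ (fun i : Fin m => fun j l => T i j l)) :
    ∃ α : Fin k → (Fin m → ℂ), LinearIndependent ℂ α ∧
      tRank (fun l j k' => ∑ i, α l i * T i j k') + (m - k) ≤ tRank T :=
  substitution_method_general k hkm T hconc
end
end

section
/- For a concise tensor T ∈ A ⊗ B ⊗ C with a border rank r decomposition, the degree-(1,1,0) component of the limiting apolar ideal satisfies: I_{110} := lim_{ε→0} (span of the points {a_i(ε) ⊗ b_i(ε)})^⊥ ⊆ A* ⊗ B* is contained in T(C*)^⊥ and has codimension at most r in A* ⊗ B*. -/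
/-!
The perp `W_n` of the `r` vectors `u_n(l) ⊗ v_n(l)` has dimension at least `ab - r`.
Orthonormal `(ab - r)`-frames of the `W_n` lie in a compact set, so along a subsequence they
converge to a frame that is again orthonormal, hence independent; its span consists of limits of
vectors of the `W_n`. A vector of `W_n` kills every `u_n(l) ⊗ v_n(l)`, hence annihilates the
slices `T_n(γ)` of `T_n = ∑ u_n(l) ⊗ v_n(l) ⊗ w_n(l)`, and annihilating `T'(C*)` is a closed
condition on `(α, T')`, so it passes to the limit.
-/

noncomputable section
open Module Filter Topology Finset

namespace Submodule

variable {R M N : Type*} [Semiring R] [AddCommMonoid M] [Module R M] [TopologicalSpace M]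
  [ContinuousAdd M] [ContinuousConstSMul R M]

/-- The Kuratowski lower limit of the subspaces `W n` along the subsequence `ψ`. -/
def lowerLimit (W : ℕ → Submodule R M) (ψ : ℕ → ℕ) : Submodule R M where
  carrier := {x | ∃ s : ℕ → M, (∀ n, s n ∈ W n) ∧ Tendsto (s ∘ ψ) atTop (𝓝 x)}
  zero_mem' := ⟨fun _ => 0, fun n => (W n).zero_mem, tendsto_const_nhds⟩
  add_mem' := fun ⟨s, hs, hlim⟩ ⟨t, ht, hlim'⟩ =>
    ⟨s + t, fun n => (W n).add_mem (hs n) (ht n), hlim.add hlim'⟩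
  smul_mem' c _ := fun ⟨s, hs, hlim⟩ =>
    ⟨c • s, fun n => (W n).smul_mem c (hs n), hlim.const_smul c⟩

variable [AddCommMonoid N] [Module R N] [TopologicalSpace N] [ContinuousAdd N]
  [ContinuousConstSMul R N]

theorem map_lowerLimit_le {f : M →ₗ[R] N} (hf : Continuous f) (W : ℕ → Submodule R M)
    (ψ : ℕ → ℕ) : (lowerLimit W ψ).map f ≤ lowerLimit (fun n => (W n).map f) ψ := by
  rintro _ ⟨x, ⟨s, hs, hlim⟩, rfl⟩
  exact ⟨f ∘ s, fun n => mem_map_of_mem (hs n), (hf.tendsto x).comp hlim⟩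

end Submodule

section InnerProductSpace

variable {𝕜 E : Type*} [RCLike 𝕜] [NormedAddCommGroup E] [InnerProductSpace 𝕜 E]

theorem orthonormal_of_tendsto {ι : Type*} {e : ℕ → ι → E} {f : ι → E}
    (he : ∀ n, Orthonormal 𝕜 (e n)) (hlim : Tendsto e atTop (𝓝 f)) : Orthonormal 𝕜 f := by
  classical
  rw [orthonormal_iff_ite]
  intro i j
  have hinner : Tendsto (fun n => inner 𝕜 (e n i) (e n j)) atTop (𝓝 (inner 𝕜 (f i) (f j))) :=
    (tendsto_pi_nhds.1 hlim i).inner (tendsto_pi_nhds.1 hlim j)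
  simp_rw [orthonormal_iff_ite.mp (he _)] at hinner
  exact tendsto_nhds_unique hinner tendsto_const_nhds

theorem Submodule.exists_orthonormal_of_le_finrank [FiniteDimensional 𝕜 E]
    {W : Submodule 𝕜 E} {d : ℕ} (hd : d ≤ finrank 𝕜 W) :
    ∃ e : Fin d → E, Orthonormal 𝕜 e ∧ ∀ i, e i ∈ W := by
  let b := stdOrthonormalBasis 𝕜 W
  refine ⟨fun i => b (Fin.castLE hd i), ?_, fun i => (b _).2⟩
  exact (b.orthonormal.comp_linearIsometry W.subtypeₗᵢ).comp _ (Fin.castLE_injective hd)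

theorem Submodule.exists_strictMono_le_finrank_lowerLimit_of_inner [FiniteDimensional 𝕜 E]
    (W : ℕ → Submodule 𝕜 E) {d : ℕ} (hd : ∀ n, d ≤ finrank 𝕜 (W n)) :
    ∃ ψ : ℕ → ℕ, StrictMono ψ ∧ d ≤ finrank 𝕜 (lowerLimit W ψ) := by
  choose e he_on he_mem using fun n => (W n).exists_orthonormal_of_le_finrank (hd n)
  have := FiniteDimensional.proper_rclike 𝕜 E
  have hbounded : ∀ n, e n ∈ Metric.closedBall (0 : Fin d → E) 1 := fun n => by
    rw [mem_closedBall_zero_iff, pi_norm_le_iff_of_nonneg zero_le_one]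
    exact fun i => ((he_on n).1 i).le
  obtain ⟨f, -, ψ, hψ, hlim⟩ := (isCompact_closedBall (0 : Fin d → E) 1).tendsto_subseq hbounded
  have hspan : span 𝕜 (Set.range f) ≤ lowerLimit W ψ := span_le.2 <| by
    rintro _ ⟨i, rfl⟩
    exact ⟨fun n => e n i, fun n => he_mem n i, tendsto_pi_nhds.1 hlim i⟩
  refine ⟨ψ, hψ, ?_⟩
  have hf : Orthonormal 𝕜 f := orthonormal_of_tendsto (fun n => he_on (ψ n)) hlim
  calc d = finrank 𝕜 (span 𝕜 (Set.range f)) := by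
        rw [finrank_span_eq_card hf.linearIndependent, Fintype.card_fin]
    _ ≤ _ := finrank_mono hspan

end InnerProductSpace

theorem Submodule.exists_strictMono_le_finrank_lowerLimit {𝕜 E : Type*} [RCLike 𝕜]
    [NormedAddCommGroup E] [NormedSpace 𝕜 E] [FiniteDimensional 𝕜 E]
    (W : ℕ → Submodule 𝕜 E) {d : ℕ} (hd : ∀ n, d ≤ finrank 𝕜 (W n)) :
    ∃ ψ : ℕ → ℕ, StrictMono ψ ∧ d ≤ finrank 𝕜 (lowerLimit W ψ) := by
  let e : E ≃ₗ[𝕜] EuclideanSpace 𝕜 (Fin (finrank 𝕜 E)) :=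
    LinearEquiv.ofFinrankEq _ _ finrank_euclideanSpace_fin.symm
  obtain ⟨ψ, hψ, hdim⟩ := exists_strictMono_le_finrank_lowerLimit_of_inner
    (fun n => (W n).map e.toLinearMap) fun n => by rw [LinearEquiv.finrank_map_eq]; exact hd n
  refine ⟨ψ, hψ, hdim.trans ?_⟩
  have hmap := map_lowerLimit_le (LinearMap.continuous_of_finiteDimensional e.symm.toLinearMap)
    (fun n => (W n).map e.toLinearMap) ψ
  have hW : (fun n => ((W n).map e.toLinearMap).map e.symm.toLinearMap) = W := by
    funext n; exact (map_symm_eq_iff e).2 rfl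
  rw [hW] at hmap
  exact (LinearEquiv.finrank_map_eq _ _).symm.trans_le (finrank_mono hmap)

section Pairing

variable {ι κ μ ρ R : Type*} [Fintype ι] [Fintype κ] [Fintype μ] [Fintype ρ] [CommSemiring R]

/-- `α ↦ (⟨α, X l⟩)_l` for the trace pairing of `A* ⊗ B*` with `A ⊗ B` written as arrays, so
that its kernel is the perp of the family `X`. -/
def pairingMap (X : ρ → ι → κ → R) : (ι → κ → R) →ₗ[R] ρ → R where
  toFun α l := ∑ i, ∑ j, α i j * X l i j
  map_add' α β := by ext l; simp [add_mul, sum_add_distrib]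
  map_smul' c α := by ext l; simp [mul_sum, mul_assoc]

omit [Fintype ρ] in
theorem mem_ker_pairingMap {X : ρ → ι → κ → R} {α : ι → κ → R} :
    α ∈ LinearMap.ker (pairingMap X) ↔ ∀ l, ∑ i, ∑ j, α i j * X l i j = 0 :=
  funext_iff

theorem le_finrank_ker_pairingMap {K : Type*} [Field K] (X : ρ → ι → κ → K) :
    Fintype.card ι * Fintype.card κ - Fintype.card ρ ≤
      finrank K (LinearMap.ker (pairingMap X)) := by
  have hrank := (pairingMap X).finrank_range_add_finrank_ker
  have hrange := Submodule.finrank_le (LinearMap.range (pairingMap X))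
  simp only [Module.finrank_pi_fintype, Module.finrank_self, sum_const, card_univ, smul_eq_mul,
    mul_one] at hrank hrange
  omega

theorem sum_mul_sum_rankSum_mul_eq_zero {U : ρ → ι → R} {V : ρ → κ → R} {α : ι → κ → R}
    (hα : α ∈ LinearMap.ker (pairingMap fun l i j => U l i * V l j)) (W : ρ → μ → R)
    (γ : μ → R) : ∑ i, ∑ j, α i j * ∑ k, (∑ l, U l i * V l j * W l k) * γ k = 0 :=
  calc _ = ∑ i, ∑ j, ∑ l, α i j * (U l i * V l j) * ∑ k, W l k * γ k := by
        refine sum_congr rfl fun i _ => sum_congr rfl fun j _ => ?_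
        simp only [sum_mul, mul_sum]
        rw [sum_comm]
        exact sum_congr rfl fun _ _ => sum_congr rfl fun _ _ => by ring
    _ = ∑ l, (∑ i, ∑ j, α i j * (U l i * V l j)) * ∑ k, W l k * γ k := by
        rw [sum_comm_cycle]; simp only [sum_mul]
    _ = 0 := by simp [mem_ker_pairingMap.1 hα]

theorem isClosed_setOf_forall_sum_mul_sum_mul_eq_zero [TopologicalSpace R]
    [IsTopologicalSemiring R] [T2Space R] :
    IsClosed {p : (ι → κ → R) × (ι → κ → μ → R) |
      ∀ γ : μ → R, ∑ i, ∑ j, p.1 i j * ∑ k, p.2 i j k * γ k = 0} := by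
  simp only [Set.ofPred_forall]
  exact isClosed_iInter fun γ => isClosed_eq (by fun_prop) continuous_const

end Pairing

theorem border_apolarity_I110_general {a b c : ℕ} (r : ℕ)
    (T : Fin a → Fin b → Fin c → ℂ)
    (u : ℕ → Fin r → Fin a → ℂ) (v : ℕ → Fin r → Fin b → ℂ) (w : ℕ → Fin r → Fin c → ℂ)
    (hlim : Tendsto (fun n => (fun i j k => ∑ l, u n l i * v n l j * w n l k :
        Fin a → Fin b → Fin c → ℂ)) atTop (nhds T)) :
    ∃ I : Submodule ℂ (Fin a → Fin b → ℂ),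
      (∀ α ∈ I, ∃ s : ℕ → (Fin a → Fin b → ℂ),
        (∀ n, ∀ l : Fin r, ∑ i, ∑ j, s n i j * (u n l i * v n l j) = 0) ∧
        MapClusterPt α atTop s) ∧
      (∀ α ∈ I, ∀ γ : Fin c → ℂ, ∑ i, ∑ j, α i j * (∑ k, T i j k * γ k) = 0) ∧
      a * b - r ≤ finrank ℂ I := by
  let W n := LinearMap.ker (pairingMap fun l i j => u n l i * v n l j)
  obtain ⟨ψ, hψ, hdim⟩ := Submodule.exists_strictMono_le_finrank_lowerLimit W (d := a * b - r)
    fun n => by simpa using le_finrank_ker_pairingMap fun l i j => u n l i * v n l j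
  refine ⟨Submodule.lowerLimit W ψ, fun α ⟨s, hsW, hs⟩ => ?_, fun α ⟨s, hsW, hs⟩ => ?_, hdim⟩
  · exact ⟨s, fun n => mem_ker_pairingMap.1 (hsW n), hs.mapClusterPt.of_comp hψ.tendsto_atTop⟩
  · exact isClosed_setOf_forall_sum_mul_sum_mul_eq_zero.mem_of_tendsto
      (hs.prodMk_nhds (hlim.comp hψ.tendsto_atTop))
      (Eventually.of_forall fun m => sum_mul_sum_rankSum_mul_eq_zero (hsW (ψ m)) (w (ψ m)))

theorem border_apolarity_I110 {a b c : ℕ} (r : ℕ)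
    (T : Fin a → Fin b → Fin c → ℂ)
    (hA : LinearIndependent ℂ (fun i : Fin a => fun j k => T i j k))
    (hB : LinearIndependent ℂ (fun j : Fin b => fun i k => T i j k))
    (hC : LinearIndependent ℂ (fun k : Fin c => fun i j => T i j k))
    (u : ℕ → Fin r → Fin a → ℂ) (v : ℕ → Fin r → Fin b → ℂ) (w : ℕ → Fin r → Fin c → ℂ)
    (hlim : Tendsto (fun n => (fun i j k => ∑ l, u n l i * v n l j * w n l k :
        Fin a → Fin b → Fin c → ℂ)) atTop (nhds T)) :
    ∃ I : Submodule ℂ (Fin a → Fin b → ℂ),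
      (∀ α ∈ I, ∃ s : ℕ → (Fin a → Fin b → ℂ),
        (∀ n, ∀ l : Fin r, ∑ i, ∑ j, s n i j * (u n l i * v n l j) = 0) ∧
        MapClusterPt α atTop s) ∧
      (∀ α ∈ I, ∀ γ : Fin c → ℂ, ∑ i, ∑ j, α i j * (∑ k, T i j k * γ k) = 0) ∧
      a * b - r ≤ finrank ℂ I :=
  border_apolarity_I110_general r T u v w hlim
end
end
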